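/- arXiv:1901.01147 — 5 statements merged into one kernel-verified Lean document; each statement's English description precedes it below -/
import Mathlib

section
/- Let f : [a,b] → ℝ be Hölder continuous of order r ∈ (0,1] with constant H ≥ 0, and let u : [a,b] → ℝ be of bounded variation on [a,b]. Then for all a ≤ t₀ ≤ x ≤ t₁ ≤ b, |∫ₐᵇ f du − [u(x) − u(a)]·f(t₀) − [u(b) − u(x)]·f(t₁)| ≤ H · max{ (x−a)/2 + |t₀ − (a+x)/2|, (b−x)/2 + |t₁ − (x+b)/2| }^r · V(u;[a,b]), where V(u;[a,b]) denotes the total variation of u on [a,b]. -/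
/-!
If `x` is a node of a tagged partition, the Riemann–Stieltjes sum minus the two-point rule is
`∑ (f ξᵢ - f t₀) Δuᵢ` over the cells left of `x` plus `∑ (f ξᵢ - f t₁) Δuᵢ` over those right of it.
A tag `ξ ∈ [a, x]` lies within `(x - a) / 2 + |t₀ - (a + x) / 2|` of `t₀` (pass through the
midpoint), and similarly on `[x, b]`, so Hölder continuity bounds every factor `f ξᵢ - f tⱼ` by
`H M ^ r` (`M` the maximum in the bound), while `∑ |Δuᵢ| ≤ V(u; [a, b])`. Partitions having `x`
as a node exist with arbitrarily small mesh, so the bound passes to the integral.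
-/

/-- A tagged partition of the interval `[a, b]`. -/
structure TaggedPartition (a b : ℝ) where
  n : ℕ
  pts : ℕ → ℝ
  tag : ℕ → ℝ
  mono : ∀ i, pts i ≤ pts (i + 1)
  first : pts 0 = a
  last : pts n = b
  tag_mem : ∀ i, pts i ≤ tag i ∧ tag i ≤ pts (i + 1)

/-- The Riemann–Stieltjes sum of `f` with respect to `u` over a tagged partition. -/
def RSsum (f u : ℝ → ℝ) {a b : ℝ} (P : TaggedPartition a b) : ℝ :=
  ∑ i ∈ Finset.range P.n, f (P.tag i) * (u (P.pts (i + 1)) - u (P.pts i))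

/-- `IsRSIntegral f u a b I` means the Riemann–Stieltjes integral `∫ₐᵇ f du` exists
and equals `I`: Riemann–Stieltjes sums converge to `I` as the mesh tends to `0`. -/
def IsRSIntegral (f u : ℝ → ℝ) (a b I : ℝ) : Prop :=
  ∀ ε > 0, ∃ δ > 0, ∀ P : TaggedPartition a b,
    (∀ i < P.n, P.pts (i + 1) - P.pts i < δ) → |RSsum f u P - I| < ε

/-- The total (Jordan) variation of `u` on `[a, b]`. -/
noncomputable def totalVar (u : ℝ → ℝ) (a b : ℝ) : ℝ :=
  (eVariationOn u (Set.Icc a b)).toReal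


open Finset

namespace TaggedPartition

variable {a b : ℝ}

def ofMonotone (p : ℕ → ℝ) (hp : Monotone p) (n : ℕ) (h0 : p 0 = a) (hn : p n = b) :
    TaggedPartition a b where
  n := n
  pts := p
  tag := p
  mono i := hp (Nat.le_succ i)
  first := h0
  last := hn
  tag_mem i := ⟨le_rfl, hp (Nat.le_succ i)⟩

lemma monotone_pts (P : TaggedPartition a b) : Monotone P.pts :=
  monotone_nat_of_le_succ P.mono

lemma left_le_pts (P : TaggedPartition a b) (i : ℕ) : a ≤ P.pts i :=
  P.first.symm.trans_le (P.monotone_pts i.zero_le)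

lemma pts_le_right (P : TaggedPartition a b) {i : ℕ} (hi : i ≤ P.n) : P.pts i ≤ b :=
  (P.monotone_pts hi).trans_eq P.last

lemma tag_mem_Icc_of_lt (P : TaggedPartition a b) {i k : ℕ} (hik : i < k) :
    P.tag i ∈ Set.Icc a (P.pts k) :=
  ⟨(P.left_le_pts i).trans (P.tag_mem i).1, (P.tag_mem i).2.trans (P.monotone_pts hik)⟩

lemma tag_mem_Icc_of_le (P : TaggedPartition a b) {i k : ℕ} (hki : k ≤ i) (hi : i < P.n) :
    P.tag i ∈ Set.Icc (P.pts k) b :=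
  ⟨(P.monotone_pts hki).trans (P.tag_mem i).1, (P.tag_mem i).2.trans (P.pts_le_right hi)⟩

lemma sum_abs_sub_le_totalVar (P : TaggedPartition a b) {u : ℝ → ℝ}
    (hu : BoundedVariationOn u (Set.Icc a b)) :
    ∑ i ∈ range P.n, |u (P.pts (i + 1)) - u (P.pts i)| ≤ totalVar u a b := by
  have hsum : ∑ i ∈ range P.n, edist (u (P.pts (i + 1))) (u (P.pts i)) ≤
      eVariationOn u (Set.Icc a b) := by
    rw [range_eq_Ico]
    exact eVariationOn.sum_le_of_monotoneOn_Icc (P.monotone_pts.monotoneOn _)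
      fun i hi => ⟨P.left_le_pts i, P.pts_le_right hi.2⟩
  rw [totalVar, ← ENNReal.ofReal_le_iff_le_toReal hu,
    ENNReal.ofReal_sum_of_nonneg fun _ _ => abs_nonneg _]
  simpa only [edist_dist, Real.dist_eq] using hsum

lemma abs_RSsum_sub_two_point_le (P : TaggedPartition a b) {f u : ℝ → ℝ}
    (hu : BoundedVariationOn u (Set.Icc a b)) {k : ℕ} (hk : k ≤ P.n) {x : ℝ} (hx : P.pts k = x)
    {c₀ c₁ C : ℝ} (hC : 0 ≤ C) (h₀ : ∀ s ∈ Set.Icc a x, |f s - c₀| ≤ C)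
    (h₁ : ∀ s ∈ Set.Icc x b, |f s - c₁| ≤ C) :
    |RSsum f u P - ((u x - u a) * c₀ + (u b - u x) * c₁)| ≤ C * totalVar u a b := by
  subst hx
  set Δ : ℕ → ℝ := fun i => u (P.pts (i + 1)) - u (P.pts i)
  have hsplit : RSsum f u P - ((u (P.pts k) - u a) * c₀ + (u b - u (P.pts k)) * c₁) =
      ∑ i ∈ range k, (f (P.tag i) - c₀) * Δ i + ∑ i ∈ Ico k P.n, (f (P.tag i) - c₁) * Δ i := by
    have hleft : ∑ i ∈ range k, Δ i = u (P.pts k) - u a := by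
      simpa only [P.first] using sum_range_sub (fun i => u (P.pts i)) k
    have hright : ∑ i ∈ Ico k P.n, Δ i = u b - u (P.pts k) := by
      simpa only [P.last] using sum_Ico_sub (fun i => u (P.pts i)) hk
    simp only [sub_mul, sum_sub_distrib, ← mul_sum, hleft, hright]
    rw [RSsum, ← sum_range_add_sum_Ico _ hk]
    ring
  have hbound : ∀ (s : Finset ℕ) (c : ℝ), (∀ i ∈ s, |f (P.tag i) - c| ≤ C) →
      |∑ i ∈ s, (f (P.tag i) - c) * Δ i| ≤ ∑ i ∈ s, C * |Δ i| := fun s c hs =>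
    (abs_sum_le_sum_abs _ _).trans <| sum_le_sum fun i hi => by
      rw [abs_mul]; exact mul_le_mul_of_nonneg_right (hs i hi) (abs_nonneg _)
  calc _ ≤ ∑ i ∈ range k, C * |Δ i| + ∑ i ∈ Ico k P.n, C * |Δ i| := by
        rw [hsplit]
        exact (abs_add_le _ _).trans (add_le_add
          (hbound _ _ fun i hi => h₀ _ (P.tag_mem_Icc_of_lt (mem_range.1 hi)))
          (hbound _ _ fun i hi => h₁ _ (P.tag_mem_Icc_of_le (mem_Ico.1 hi).1 (mem_Ico.1 hi).2)))
    _ = C * ∑ i ∈ range P.n, |Δ i| := by rw [sum_range_add_sum_Ico _ hk, mul_sum]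
    _ ≤ C * totalVar u a b := mul_le_mul_of_nonneg_left (P.sum_abs_sub_le_totalVar hu) hC

lemma exists_pts_eq_and_mesh_lt {x : ℝ} (hax : a ≤ x) (hxb : x ≤ b) {δ : ℝ} (hδ : 0 < δ) :
    ∃ (P : TaggedPartition a b) (k : ℕ), k ≤ P.n ∧ P.pts k = x ∧
      ∀ i < P.n, P.pts (i + 1) - P.pts i < δ := by
  obtain ⟨N, hN⟩ := exists_nat_gt ((b - a) / δ)
  have hN0 : (0 : ℝ) < N := lt_of_le_of_lt (div_nonneg (by linarith) hδ.le) hN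
  set c := (x - a) / N
  set d := (b - x) / N
  have hc : 0 ≤ c := div_nonneg (by linarith) hN0.le
  have hd : 0 ≤ d := div_nonneg (by linarith) hN0.le
  have hcd : c + d < δ := by
    rw [← add_div, div_lt_iff₀ hN0]
    rw [div_lt_iff₀ hδ] at hN
    linarith
  have hNc : N * c = x - a := mul_div_cancel₀ _ hN0.ne'
  have hNd : N * d = b - x := mul_div_cancel₀ _ hN0.ne'
  -- `p` climbs from `a` to `x` in steps `c` while `t ≤ N`, then from `x` on in steps `d`.
  set p : ℝ → ℝ := fun t => min (a + t * c) x + max 0 ((t - N) * d)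
  have hp : Monotone p := fun s t hst => add_le_add
    (min_le_min_right _ (by nlinarith)) (max_le_max_left _ (by nlinarith))
  have hstep : ∀ t, p (t + 1) ≤ p t + (c + d) := fun t => by
    have h₁ : min (a + (t + 1) * c) x ≤ min (a + t * c) x + c := by
      rw [← min_add_add_right]; exact min_le_min (by linarith) (by linarith)
    have h₂ : max 0 ((t + 1 - N) * d) ≤ max 0 ((t - N) * d) + d := by
      rw [← max_add_add_right]; exact max_le_max (by linarith) (by linarith)
    simp only [p]
    linarith
  refine ⟨ofMonotone (fun i => p i) (hp.comp Nat.mono_cast) (2 * N) ?_ ?_, N,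
    by simp only [ofMonotone]; omega, ?_, fun i _ => ?_⟩
  · simp only [p, Nat.cast_zero, zero_mul, add_zero, zero_sub, neg_mul, min_eq_left hax]
    simp [hN0.le, hd, mul_nonneg]
  · simp only [p]
    push_cast
    rw [min_eq_right (by nlinarith), max_eq_right (by nlinarith)]
    linarith
  · simp only [ofMonotone, p, sub_self, zero_mul, max_self, add_zero]
    exact min_eq_right (by linarith)
  · have := hstep i
    simp only [ofMonotone, Nat.cast_succ]
    linarith

end TaggedPartition

lemma abs_sub_le_half_add_abs_sub_midpoint {a x s t : ℝ} (hs : s ∈ Set.Icc a x) :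
    |s - t| ≤ (x - a) / 2 + |t - (a + x) / 2| := by
  have hmid : |s - (a + x) / 2| ≤ (x - a) / 2 := abs_le.2 ⟨by linarith [hs.1], by linarith [hs.2]⟩
  calc |s - t| ≤ |s - (a + x) / 2| + |(a + x) / 2 - t| := abs_sub_le _ _ _
    _ ≤ (x - a) / 2 + |t - (a + x) / 2| := by rw [abs_sub_comm ((a + x) / 2)]; linarith

lemma abs_sub_le_of_holder_of_mem_Icc {f : ℝ → ℝ} {a b H r : ℝ} (hr : 0 ≤ r) (hH : 0 ≤ H)
    (hf : ∀ s ∈ Set.Icc a b, ∀ t ∈ Set.Icc a b, |f s - f t| ≤ H * |s - t| ^ r)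
    {p q t M : ℝ} (hpq : Set.Icc p q ⊆ Set.Icc a b) (ht : t ∈ Set.Icc a b)
    (hM : (q - p) / 2 + |t - (p + q) / 2| ≤ M) {s : ℝ} (hs : s ∈ Set.Icc p q) :
    |f s - f t| ≤ H * M ^ r :=
  (hf s (hpq hs) t ht).trans <| mul_le_mul_of_nonneg_left
    (Real.rpow_le_rpow (abs_nonneg _) ((abs_sub_le_half_add_abs_sub_midpoint hs).trans hM) hr) hH

theorem two_point_quadrature_bounded_variation_general
    (a b H r t0 x t1 I : ℝ) (f u : ℝ → ℝ)
    (hr : 0 < r) (hH : 0 ≤ H)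
    (hf : ∀ s ∈ Set.Icc a b, ∀ t ∈ Set.Icc a b, |f s - f t| ≤ H * |s - t| ^ r)
    (hu : BoundedVariationOn u (Set.Icc a b))
    (ht0 : a ≤ t0) (ht0x : t0 ≤ x) (hxt1 : x ≤ t1) (ht1 : t1 ≤ b)
    (hI : IsRSIntegral f u a b I) :
    |I - (u x - u a) * f t0 - (u b - u x) * f t1| ≤
      H * (max ((x - a) / 2 + |t0 - (a + x) / 2|) ((b - x) / 2 + |t1 - (x + b) / 2|)) ^ r *
        totalVar u a b := by
  set M := max ((x - a) / 2 + |t0 - (a + x) / 2|) ((b - x) / 2 + |t1 - (x + b) / 2|)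
  have hM : 0 ≤ M := le_max_of_le_left (by linarith [abs_nonneg (t0 - (a + x) / 2)])
  have hax : a ≤ x := ht0.trans ht0x
  have hxb : x ≤ b := hxt1.trans ht1
  refine le_of_forall_pos_le_add fun ε hε => ?_
  obtain ⟨δ, hδ, hclose⟩ := hI ε hε
  obtain ⟨P, k, hk, hx, hmesh⟩ := TaggedPartition.exists_pts_eq_and_mesh_lt hax hxb hδ
  have hquad : |RSsum f u P - ((u x - u a) * f t0 + (u b - u x) * f t1)| ≤
      H * M ^ r * totalVar u a b :=
    P.abs_RSsum_sub_two_point_le hu hk hx (mul_nonneg hH (Real.rpow_nonneg hM r))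
      (fun s => abs_sub_le_of_holder_of_mem_Icc hr.le hH hf (Set.Icc_subset_Icc_right hxb)
        ⟨ht0, ht0x.trans hxb⟩ (le_max_left _ _))
      (fun s => abs_sub_le_of_holder_of_mem_Icc hr.le hH hf (Set.Icc_subset_Icc_left hax)
        ⟨hax.trans hxt1, ht1⟩ (le_max_right _ _))
  rw [sub_sub]
  calc _ ≤ |I - RSsum f u P| + |RSsum f u P - ((u x - u a) * f t0 + (u b - u x) * f t1)| :=
        abs_sub_le _ _ _
    _ ≤ _ := by linarith [abs_sub_comm I (RSsum f u P), hclose P hmesh]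

theorem two_point_quadrature_bounded_variation
    (a b H r t0 x t1 I : ℝ) (f u : ℝ → ℝ)
    (hr : 0 < r) (hr1 : r ≤ 1) (hH : 0 ≤ H)
    (hf : ∀ s ∈ Set.Icc a b, ∀ t ∈ Set.Icc a b, |f s - f t| ≤ H * |s - t| ^ r)
    (hu : BoundedVariationOn u (Set.Icc a b))
    (ht0 : a ≤ t0) (ht0x : t0 ≤ x) (hxt1 : x ≤ t1) (ht1 : t1 ≤ b)
    (hI : IsRSIntegral f u a b I) :
    |I - (u x - u a) * f t0 - (u b - u x) * f t1| ≤
      H * (max ((x - a) / 2 + |t0 - (a + x) / 2|) ((b - x) / 2 + |t1 - (x + b) / 2|)) ^ r *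
        totalVar u a b :=
  two_point_quadrature_bounded_variation_general a b H r t0 x t1 I f u hr hH hf hu ht0 ht0x hxt1 ht1
    hI
end

section
/- Let f : [a,b] → ℝ be Hölder continuous of order r ∈ (0,1] with constant H, and u : [a,b] → ℝ of bounded variation. Then for all x ∈ [a,b], |∫ₐᵇ f du − [u(x) − u(a)]·f(a) − [u(b) − u(x)]·f(b)| ≤ H · ((b−a)/2 + |x − (a+b)/2|)^r · V(u;[a,b]). -/
open Finset

lemma max_sub_sub_eq_half_add_abs (a b x : ℝ) :
    max (x - a) (b - x) = (b - a) / 2 + |x - (a + b) / 2| := by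
  rw [abs_eq_max_neg, ← max_add_add_left]
  congr 1 <;> ring

lemma abs_sub_le_mul_rpow_of_holderOn {f : ℝ → ℝ} {S : Set ℝ} {H r K s t : ℝ}
    (hf : ∀ s ∈ S, ∀ t ∈ S, |f s - f t| ≤ H * |s - t| ^ r) (hH : 0 ≤ H) (hr : 0 ≤ r)
    (hs : s ∈ S) (ht : t ∈ S) (hst : |s - t| ≤ K) :
    |f s - f t| ≤ H * K ^ r :=
  (hf s hs t ht).trans (by gcongr)

lemma abs_sum_mul_sub_sum_mul_le {ι : Type*} (s : Finset ι) {g c d : ι → ℝ} {M : ℝ}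
    (h : ∀ i ∈ s, |g i - c i| ≤ M) :
    |∑ i ∈ s, g i * d i - ∑ i ∈ s, c i * d i| ≤ M * ∑ i ∈ s, |d i| := by
  rw [← sum_sub_distrib, mul_sum]
  refine (abs_sum_le_sum_abs _ _).trans (sum_le_sum fun i hi => ?_)
  rw [← sub_mul, abs_mul]
  exact mul_le_mul_of_nonneg_right (h i hi) (abs_nonneg _)

lemma sum_range_two_mul_ite_mul_sub (α β : ℝ) (v : ℕ → ℝ) (N : ℕ) :
    ∑ i ∈ range (2 * N), (if i < N then α else β) * (v (i + 1) - v i) =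
      α * (v N - v 0) + β * (v (2 * N) - v N) := by
  have htail := sum_range_sub (fun i => v (N + i)) N
  rw [add_zero] at htail
  rw [two_mul, sum_range_add, ← sum_range_sub, ← htail, mul_sum, mul_sum]
  congr 1
  · exact sum_congr rfl fun i hi => by rw [if_pos (mem_range.mp hi)]
  · exact sum_congr rfl fun i _ => by rw [if_neg (by omega), add_assoc]

lemma BoundedVariationOn.sum_abs_sub_le {u : ℝ → ℝ} {s : Set ℝ} (hu : BoundedVariationOn u s)
    {p : ℕ → ℝ} {n : ℕ} (hp : MonotoneOn p (Set.Iic n)) (hps : ∀ i ≤ n, p i ∈ s) :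
    ∑ i ∈ range n, |u (p (i + 1)) - u (p i)| ≤ (eVariationOn u s).toReal := by
  have hsum := eVariationOn.sum_le_of_monotoneOn_Iic (f := u) hp hps
  simp only [← Real.dist_eq, dist_edist]
  rw [← ENNReal.toReal_sum fun i _ => edist_ne_top _ _]
  exact ENNReal.toReal_mono hu hsum

lemma IsRSIntegral.abs_sub_le_of_forall_mesh_lt {f u : ℝ → ℝ} {a b I S C : ℝ}
    (hI : IsRSIntegral f u a b I)
    (h : ∀ δ > 0, ∃ P : TaggedPartition a b,
      (∀ i < P.n, P.pts (i + 1) - P.pts i < δ) ∧ |RSsum f u P - S| ≤ C) :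
    |I - S| ≤ C := by
  refine le_of_forall_pos_le_add fun ε hε => ?_
  obtain ⟨δ, hδ, hI⟩ := hI ε hε
  obtain ⟨P, hmesh, hPS⟩ := h δ hδ
  linarith [hI P hmesh, abs_sub_le I (RSsum f u P) S, abs_sub_comm I (RSsum f u P)]

section TwoPieceGrid

variable {a x b : ℝ} {N : ℕ}

noncomputable def twoPieceGrid (a x b : ℝ) (N i : ℕ) : ℝ :=
  if i ≤ N then a + i * ((x - a) / N) else x + (i - N) * ((b - x) / N)

lemma twoPieceGrid_zero : twoPieceGrid a x b N 0 = a := by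
  simp [twoPieceGrid]

lemma twoPieceGrid_self (hN : N ≠ 0) : twoPieceGrid a x b N N = x := by
  simp only [twoPieceGrid, le_refl, if_pos]
  field_simp
  ring

lemma twoPieceGrid_two_mul (hN : N ≠ 0) : twoPieceGrid a x b N (2 * N) = b := by
  simp only [twoPieceGrid, if_neg (show ¬2 * N ≤ N by omega)]
  push_cast
  field_simp
  ring

lemma twoPieceGrid_succ_sub (hN : N ≠ 0) (i : ℕ) :
    twoPieceGrid a x b N (i + 1) - twoPieceGrid a x b N i =
      if i < N then (x - a) / N else (b - x) / N := by
  rcases lt_trichotomy i N with hi | rfl | hi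
  · simp only [twoPieceGrid, if_pos hi, if_pos hi.le, if_pos (Nat.succ_le_of_lt hi)]
    push_cast
    ring
  · rw [twoPieceGrid_self hN]
    simp only [twoPieceGrid, lt_irrefl, if_false, if_neg (Nat.not_succ_le_self i)]
    push_cast
    ring
  · simp only [twoPieceGrid, if_neg (by omega : ¬i < N), if_neg (by omega : ¬i ≤ N),
      if_neg (by omega : ¬i + 1 ≤ N)]
    push_cast
    ring

lemma twoPieceGrid_succ_sub_le (hax : a ≤ x) (hxb : x ≤ b) (hN : N ≠ 0) (i : ℕ) :
    twoPieceGrid a x b N (i + 1) - twoPieceGrid a x b N i ≤ (b - a) / N := by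
  rw [twoPieceGrid_succ_sub hN]
  split_ifs <;> gcongr

lemma monotone_twoPieceGrid (hax : a ≤ x) (hxb : x ≤ b) (hN : N ≠ 0) :
    Monotone (twoPieceGrid a x b N) := by
  refine monotone_nat_of_le_succ fun i => sub_nonneg.mp ?_
  rw [twoPieceGrid_succ_sub hN]
  split_ifs <;> exact div_nonneg (by linarith) (Nat.cast_nonneg N)

lemma twoPieceGrid_mem_Icc_left (hax : a ≤ x) (hxb : x ≤ b) (hN : N ≠ 0) {i : ℕ} (hi : i ≤ N) :
    twoPieceGrid a x b N i ∈ Set.Icc a x := by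
  have hmono := monotone_twoPieceGrid hax hxb hN
  have hlow := hmono (Nat.zero_le i)
  have hupp := hmono hi
  rw [twoPieceGrid_zero] at hlow
  rw [twoPieceGrid_self hN] at hupp
  exact ⟨hlow, hupp⟩

lemma twoPieceGrid_mem_Icc_right (hax : a ≤ x) (hxb : x ≤ b) (hN : N ≠ 0) {i : ℕ} (hNi : N ≤ i)
    (hi : i ≤ 2 * N) :
    twoPieceGrid a x b N i ∈ Set.Icc x b := by
  have hmono := monotone_twoPieceGrid hax hxb hN
  have hlow := hmono hNi
  have hupp := hmono hi
  rw [twoPieceGrid_self hN] at hlow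
  rw [twoPieceGrid_two_mul hN] at hupp
  exact ⟨hlow, hupp⟩

lemma twoPieceGrid_mem_Icc (hax : a ≤ x) (hxb : x ≤ b) (hN : N ≠ 0) {i : ℕ} (hi : i ≤ 2 * N) :
    twoPieceGrid a x b N i ∈ Set.Icc a b := by
  rcases le_total i N with hiN | hNi
  · exact Set.Icc_subset_Icc_right hxb (twoPieceGrid_mem_Icc_left hax hxb hN hiN)
  · exact Set.Icc_subset_Icc_left hax (twoPieceGrid_mem_Icc_right hax hxb hN hNi hi)

lemma exists_twoPieceGrid_succ_sub_lt (hax : a ≤ x) (hxb : x ≤ b) {δ : ℝ} (hδ : 0 < δ) :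
    ∃ N ≠ 0, ∀ i, twoPieceGrid a x b N (i + 1) - twoPieceGrid a x b N i < δ := by
  obtain ⟨N, hN⟩ := exists_nat_gt ((b - a) / δ)
  have hN0 : (0 : ℝ) < N := lt_of_le_of_lt (div_nonneg (by linarith) hδ.le) hN
  have hN0' : N ≠ 0 := by exact_mod_cast hN0.ne'
  refine ⟨N, hN0', fun i => (twoPieceGrid_succ_sub_le hax hxb hN0' i).trans_lt ?_⟩
  rwa [div_lt_iff₀ hN0, mul_comm, ← div_lt_iff₀ hδ]

noncomputable def twoPieceGridPartition (hax : a ≤ x) (hxb : x ≤ b) (hN : N ≠ 0) :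
    TaggedPartition a b where
  n := 2 * N
  pts := twoPieceGrid a x b N
  tag := twoPieceGrid a x b N
  mono i := monotone_twoPieceGrid hax hxb hN i.le_succ
  first := twoPieceGrid_zero
  last := twoPieceGrid_two_mul hN
  tag_mem i := ⟨le_rfl, monotone_twoPieceGrid hax hxb hN i.le_succ⟩

end TwoPieceGrid

lemma abs_RSsum_twoPieceGridPartition_sub_le {f u : ℝ → ℝ} {a x b H r : ℝ} {N : ℕ}
    (hf : ∀ s ∈ Set.Icc a b, ∀ t ∈ Set.Icc a b, |f s - f t| ≤ H * |s - t| ^ r)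
    (hH : 0 ≤ H) (hr : 0 ≤ r) (hu : BoundedVariationOn u (Set.Icc a b))
    (hax : a ≤ x) (hxb : x ≤ b) (hN : N ≠ 0) :
    |RSsum f u (twoPieceGridPartition hax hxb hN) - ((u x - u a) * f a + (u b - u x) * f b)| ≤
      H * max (x - a) (b - x) ^ r * totalVar u a b := by
  set p := twoPieceGrid a x b N
  have hmono : Monotone p := monotone_twoPieceGrid hax hxb hN
  have hmem : ∀ i ≤ 2 * N, p i ∈ Set.Icc a b := fun i => twoPieceGrid_mem_Icc hax hxb hN
  have htrapezoid : (u x - u a) * f a + (u b - u x) * f b =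
      ∑ i ∈ range (2 * N), (if i < N then f a else f b) * (u (p (i + 1)) - u (p i)) := by
    rw [sum_range_two_mul_ite_mul_sub (f a) (f b) (fun i => u (p i)) N]
    simp only [p, twoPieceGrid_zero, twoPieceGrid_self hN, twoPieceGrid_two_mul hN]
    ring
  have hclose : ∀ i ∈ range (2 * N),
      |f (p i) - (if i < N then f a else f b)| ≤ H * max (x - a) (b - x) ^ r := by
    intro i hi
    have hi2N := (mem_range.mp hi).le
    split_ifs with hiN
    · have hpi := twoPieceGrid_mem_Icc_left hax hxb hN hiN.le
      refine abs_sub_le_mul_rpow_of_holderOn hf hH hr (hmem i hi2N) ⟨le_rfl, hax.trans hxb⟩ ?_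
      rw [abs_of_nonneg (sub_nonneg.mpr hpi.1)]
      exact le_max_of_le_left (by linarith [hpi.2])
    · have hpi := twoPieceGrid_mem_Icc_right hax hxb hN (not_lt.mp hiN) hi2N
      refine abs_sub_le_mul_rpow_of_holderOn hf hH hr (hmem i hi2N) ⟨hax.trans hxb, le_rfl⟩ ?_
      rw [abs_of_nonpos (sub_nonpos.mpr hpi.2)]
      exact le_max_of_le_right (by linarith [hpi.1])
  change |∑ i ∈ range (2 * N), f (p i) * (u (p (i + 1)) - u (p i)) - _| ≤ _
  rw [htrapezoid]
  refine (abs_sum_mul_sub_sum_mul_le _ hclose).trans ?_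
  gcongr
  exact hu.sum_abs_sub_le (hmono.monotoneOn _) hmem

theorem two_point_trapezoid_bounded_variation_general
    (a b H r x I : ℝ) (f u : ℝ → ℝ)
    (hr : 0 < r) (hH : 0 ≤ H)
    (hf : ∀ s ∈ Set.Icc a b, ∀ t ∈ Set.Icc a b, |f s - f t| ≤ H * |s - t| ^ r)
    (hu : BoundedVariationOn u (Set.Icc a b))
    (hx : x ∈ Set.Icc a b)
    (hI : IsRSIntegral f u a b I) :
    |I - (u x - u a) * f a - (u b - u x) * f b| ≤
      H * ((b - a) / 2 + |x - (a + b) / 2|) ^ r * totalVar u a b := by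
  obtain ⟨hax, hxb⟩ := hx
  rw [← max_sub_sub_eq_half_add_abs, sub_sub]
  refine hI.abs_sub_le_of_forall_mesh_lt fun δ hδ => ?_
  obtain ⟨N, hN, hmesh⟩ := exists_twoPieceGrid_succ_sub_lt hax hxb hδ
  exact ⟨twoPieceGridPartition hax hxb hN, fun i _ => hmesh i,
    abs_RSsum_twoPieceGridPartition_sub_le hf hH hr.le hu hax hxb hN⟩

theorem two_point_trapezoid_bounded_variation
    (a b H r x I : ℝ) (f u : ℝ → ℝ)
    (hr : 0 < r) (hr1 : r ≤ 1) (hH : 0 ≤ H)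
    (hf : ∀ s ∈ Set.Icc a b, ∀ t ∈ Set.Icc a b, |f s - f t| ≤ H * |s - t| ^ r)
    (hu : BoundedVariationOn u (Set.Icc a b))
    (hx : x ∈ Set.Icc a b)
    (hI : IsRSIntegral f u a b I) :
    |I - (u x - u a) * f a - (u b - u x) * f b| ≤
      H * ((b - a) / 2 + |x - (a + b) / 2|) ^ r * totalVar u a b :=
  two_point_trapezoid_bounded_variation_general a b H r x I f u hr hH hf hu hx hI
end

section
/- Let f : [a,b] → ℝ be Hölder continuous of order r ∈ (0,1] with constant H, and let g : [a,b] → ℝ be continuous. Then for all a ≤ t₀ ≤ x ≤ t₁ ≤ b, |f(t₀)·∫ₐˣ g(s) ds + f(t₁)·∫ₓᵇ g(s) ds − ∫ₐᵇ f(s)g(s) ds| ≤ H · max{ (x−a)/2 + |t₀ − (a+x)/2|, (b−x)/2 + |t₁ − (x+b)/2| }^r · ∫ₐᵇ |g(t)| dt. -/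
/-- A function satisfying a Hölder condition on a set is continuous on it. -/
lemma holder_continuousOn {a b H r : ℝ} {f : ℝ → ℝ} (hr : 0 < r) (hH : 0 ≤ H)
    (hf : ∀ s ∈ Set.Icc a b, ∀ t ∈ Set.Icc a b, |f s - f t| ≤ H * |s - t| ^ r) :
    ContinuousOn f (Set.Icc a b) := by
  rw [Metric.continuousOn_iff]
  intro s hs ε hε
  refine ⟨(ε / (H + 1)) ^ (1 / r), Real.rpow_pos_of_pos (by positivity) _, fun t ht hd => ?_⟩
  have h1 : |t - s| ≤ (ε / (H + 1)) ^ (1 / r) := by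
    rw [Real.dist_eq] at hd; exact hd.le
  have h2 : |t - s| ^ r ≤ ε / (H + 1) := by
    calc |t - s| ^ r ≤ ((ε / (H + 1)) ^ (1 / r)) ^ r :=
          Real.rpow_le_rpow (abs_nonneg _) h1 hr.le
      _ = ε / (H + 1) := by
          rw [← Real.rpow_mul (by positivity), one_div, inv_mul_cancel₀ hr.ne', Real.rpow_one]
  have hst : s ∈ Set.Icc a b := hs
  calc dist (f t) (f s) = |f t - f s| := Real.dist_eq _ _
    _ ≤ H * |t - s| ^ r := hf t ht s hs
    _ ≤ H * (ε / (H + 1)) := by nlinarith [Real.rpow_nonneg (abs_nonneg (t-s)) r]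
    _ < ε := by rw [← mul_div_assoc, div_lt_iff₀ (by linarith : (0:ℝ) < H + 1)]; nlinarith

theorem two_point_quadrature_weighted_integral
    (a b H r t0 x t1 : ℝ) (f g : ℝ → ℝ)
    (hr : 0 < r) (hr1 : r ≤ 1) (hH : 0 ≤ H)
    (hf : ∀ s ∈ Set.Icc a b, ∀ t ∈ Set.Icc a b, |f s - f t| ≤ H * |s - t| ^ r)
    (hg : ContinuousOn g (Set.Icc a b))
    (ht0 : a ≤ t0) (ht0x : t0 ≤ x) (hxt1 : x ≤ t1) (ht1 : t1 ≤ b) :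
    |f t0 * (∫ s in a..x, g s) + f t1 * (∫ s in x..b, g s) - ∫ s in a..b, f s * g s| ≤
      H * (max ((x - a) / 2 + |t0 - (a + x) / 2|) ((b - x) / 2 + |t1 - (x + b) / 2|)) ^ r *
        ∫ t in a..b, |g t| := by
  set M : ℝ := max ((x - a) / 2 + |t0 - (a + x) / 2|) ((b - x) / 2 + |t1 - (x + b) / 2|) with hM
  have hax : a ≤ x := ht0.trans ht0x
  have hxb : x ≤ b := hxt1.trans ht1
  have hab : a ≤ b := hax.trans hxb
  have hM0 : 0 ≤ M := by
    refine le_trans ?_ (le_max_left _ _)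
    have := abs_nonneg (t0 - (a + x) / 2); linarith
  have hfc : ContinuousOn f (Set.Icc a b) := holder_continuousOn hr hH hf
  have hsub1 : Set.uIcc a x ⊆ Set.Icc a b := by
    rw [Set.uIcc_of_le hax]; exact Set.Icc_subset_Icc le_rfl hxb
  have hsub2 : Set.uIcc x b ⊆ Set.Icc a b := by
    rw [Set.uIcc_of_le hxb]; exact Set.Icc_subset_Icc hax le_rfl
  have hsub : Set.uIcc a b ⊆ Set.Icc a b := by rw [Set.uIcc_of_le hab]
  -- integrability
  have hfg1 : IntervalIntegrable (fun s => f s * g s) MeasureTheory.volume a x :=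
    ((hfc.mono hsub1).mul (hg.mono hsub1)).intervalIntegrable
  have hfg2 : IntervalIntegrable (fun s => f s * g s) MeasureTheory.volume x b :=
    ((hfc.mono hsub2).mul (hg.mono hsub2)).intervalIntegrable
  have hg1 : IntervalIntegrable (fun s => f t0 * g s) MeasureTheory.volume a x :=
    (continuousOn_const.mul (hg.mono hsub1)).intervalIntegrable
  have hg2 : IntervalIntegrable (fun s => f t1 * g s) MeasureTheory.volume x b :=
    (continuousOn_const.mul (hg.mono hsub2)).intervalIntegrable
  have key : f t0 * (∫ s in a..x, g s) + f t1 * (∫ s in x..b, g s) - ∫ s in a..b, f s * g s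
      = (∫ s in a..x, (f t0 - f s) * g s) + (∫ s in x..b, (f t1 - f s) * g s) := by
    have c1 : (∫ s in a..x, (f t0 - f s) * g s)
        = (∫ s in a..x, f t0 * g s) - ∫ s in a..x, f s * g s := by
      rw [← intervalIntegral.integral_sub hg1 hfg1]
      apply intervalIntegral.integral_congr
      intro s _; ring
    have c2 : (∫ s in x..b, (f t1 - f s) * g s)
        = (∫ s in x..b, f t1 * g s) - ∫ s in x..b, f s * g s := by
      rw [← intervalIntegral.integral_sub hg2 hfg2]
      apply intervalIntegral.integral_congr
      intro s _; ring
    rw [c1, c2, intervalIntegral.integral_const_mul, intervalIntegral.integral_const_mul,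
      ← intervalIntegral.integral_add_adjacent_intervals hfg1 hfg2]
    ring
  -- pointwise bounds
  have hb1 : ∀ s ∈ Set.Icc a x, |(f t0 - f s) * g s| ≤ H * M ^ r * |g s| := by
    intro s hs
    have hsab : s ∈ Set.Icc a b := Set.Icc_subset_Icc le_rfl hxb hs
    have hd : |t0 - s| ≤ M := by
      refine le_trans (le_trans (abs_sub_le t0 ((a + x) / 2) s) ?_) (le_max_left _ _)
      have : |(a + x) / 2 - s| ≤ (x - a) / 2 := by
        rw [abs_le]; constructor <;> [linarith [hs.2]; linarith [hs.1]]
      linarith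
    rw [abs_mul]
    apply mul_le_mul_of_nonneg_right _ (abs_nonneg _)
    calc |f t0 - f s| ≤ H * |t0 - s| ^ r := hf t0 ⟨ht0, ht0x.trans hxb⟩ s hsab
      _ ≤ H * M ^ r :=
        mul_le_mul_of_nonneg_left (Real.rpow_le_rpow (abs_nonneg _) hd hr.le) hH
  have hb2 : ∀ s ∈ Set.Icc x b, |(f t1 - f s) * g s| ≤ H * M ^ r * |g s| := by
    intro s hs
    have hsab : s ∈ Set.Icc a b := Set.Icc_subset_Icc hax le_rfl hs
    have hd : |t1 - s| ≤ M := by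
      refine le_trans (le_trans (abs_sub_le t1 ((x + b) / 2) s) ?_) (le_max_right _ _)
      have : |(x + b) / 2 - s| ≤ (b - x) / 2 := by
        rw [abs_le]; constructor <;> [linarith [hs.2]; linarith [hs.1]]
      linarith
    rw [abs_mul]
    apply mul_le_mul_of_nonneg_right _ (abs_nonneg _)
    calc |f t1 - f s| ≤ H * |t1 - s| ^ r := hf t1 ⟨hax.trans hxt1, ht1⟩ s hsab
      _ ≤ H * M ^ r :=
        mul_le_mul_of_nonneg_left (Real.rpow_le_rpow (abs_nonneg _) hd hr.le) hH
  -- integrability of abs integrands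
  have hai1 : IntervalIntegrable (fun s => |(f t0 - f s) * g s|) MeasureTheory.volume a x :=
    (((continuousOn_const.sub (hfc.mono hsub1)).mul (hg.mono hsub1)).abs).intervalIntegrable
  have hai2 : IntervalIntegrable (fun s => |(f t1 - f s) * g s|) MeasureTheory.volume x b :=
    (((continuousOn_const.sub (hfc.mono hsub2)).mul (hg.mono hsub2)).abs).intervalIntegrable
  have hci1 : IntervalIntegrable (fun s => H * M ^ r * |g s|) MeasureTheory.volume a x :=
    (continuousOn_const.mul (hg.mono hsub1).abs).intervalIntegrable
  have hci2 : IntervalIntegrable (fun s => H * M ^ r * |g s|) MeasureTheory.volume x b :=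
    (continuousOn_const.mul (hg.mono hsub2).abs).intervalIntegrable
  have hgi1 : IntervalIntegrable (fun s => |g s|) MeasureTheory.volume a x :=
    (hg.mono hsub1).abs.intervalIntegrable
  have hgi2 : IntervalIntegrable (fun s => |g s|) MeasureTheory.volume x b :=
    (hg.mono hsub2).abs.intervalIntegrable
  have e1 : |∫ s in a..x, (f t0 - f s) * g s| ≤ ∫ s in a..x, H * M ^ r * |g s| := by
    refine le_trans (intervalIntegral.abs_integral_le_integral_abs hax) ?_
    exact intervalIntegral.integral_mono_on hax hai1 hci1 hb1
  have e2 : |∫ s in x..b, (f t1 - f s) * g s| ≤ ∫ s in x..b, H * M ^ r * |g s| := by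
    refine le_trans (intervalIntegral.abs_integral_le_integral_abs hxb) ?_
    exact intervalIntegral.integral_mono_on hxb hai2 hci2 hb2
  rw [key]
  calc |(∫ s in a..x, (f t0 - f s) * g s) + ∫ s in x..b, (f t1 - f s) * g s|
      ≤ |∫ s in a..x, (f t0 - f s) * g s| + |∫ s in x..b, (f t1 - f s) * g s| := abs_add_le _ _
    _ ≤ (∫ s in a..x, H * M ^ r * |g s|) + ∫ s in x..b, H * M ^ r * |g s| := add_le_add e1 e2
    _ = ∫ s in a..b, H * M ^ r * |g s| := intervalIntegral.integral_add_adjacent_intervals hci1 hci2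
    _ = H * M ^ r * ∫ t in a..b, |g t| := intervalIntegral.integral_const_mul _ _
end

section
/- Let 1 < p < ∞, f Hölder continuous of order r ∈ (0,1] with constant H on [a,b], and u Lipschitz with constant L on [a,b]. Then for all x ∈ [a,b], |∫ₐᵇ f du − [u(x) − u(a)]·f(a) − [u(b) − u(x)]·f(b)| ≤ H·L·[ (x−a)^{1−1/p}·((x−a)^{rp+1}/(rp+1))^{1/p} + (b−x)^{1−1/p}·((b−x)^{rp+1}/(rp+1))^{1/p} ] = H·L·( (x−a)^{r+1} + (b−x)^{r+1} ) / (rp+1)^{1/p}. -/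
open Real Finset in
lemma tangent_rpow {A d r : ℝ} (hA : 0 ≤ A) (hd : 0 ≤ d) (hr : 0 < r) :
    A ^ (r + 1) + (r + 1) * A ^ r * d ≤ (A + d) ^ (r + 1) := by
  rcases eq_or_lt_of_le hA with h | hA
  · rw [← h]
    simp [Real.zero_rpow (by positivity : r + 1 ≠ 0), Real.zero_rpow hr.ne']
    exact Real.rpow_nonneg hd _
  · have hs : (-1:ℝ) ≤ d / A := le_trans (by norm_num) (div_nonneg hd hA.le)
    have hb := one_add_mul_self_le_rpow_one_add hs (by linarith : (1:ℝ) ≤ r + 1)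
    have hmul := mul_le_mul_of_nonneg_left hb (Real.rpow_nonneg hA.le (r+1))
    have e1 : A ^ (r+1) * (1 + d/A) ^ (r+1) = (A + d) ^ (r+1) := by
      rw [← Real.mul_rpow hA.le (by positivity)]
      congr 1; field_simp
    have e2 : A ^ (r+1) = A ^ r * A := Real.rpow_add_one hA.ne' r
    rw [e1] at hmul
    calc A^(r+1) + (r+1)*A^r*d = A^(r+1) * (1 + (r+1)*(d/A)) := by
          rw [e2]; field_simp
      _ ≤ (A+d)^(r+1) := hmul

lemma riemann_sum_rpow_le {r : ℝ} (hr : 0 < r) (n : ℕ) {d : ℝ} (hd : 0 ≤ d) :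
    ∑ i ∈ Finset.range n, ((i : ℝ) * d) ^ r * d ≤ ((n : ℝ) * d) ^ (r + 1) / (r + 1) := by
  have hr1 : (0:ℝ) < r + 1 := by linarith
  induction n with
  | zero => simp [Real.zero_rpow (by positivity : r + 1 ≠ 0)]
  | succ n ih =>
    rw [Finset.sum_range_succ]
    have key := tangent_rpow (show (0:ℝ) ≤ (n:ℝ)*d by positivity) hd hr
    have heq : ((n:ℝ)*d + d) = ((n:ℝ)+1)*d := by ring
    rw [heq] at key
    push_cast
    have h5 : ((n:ℝ)*d)^(r+1)/(r+1) + ((n:ℝ)*d)^r*d ≤ (((n:ℝ)+1)*d)^(r+1)/(r+1) := by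
      rw [div_add' _ _ _ hr1.ne']
      apply div_le_div_of_nonneg_right ?_ hr1.le
      linarith
    linarith

lemma bern_div {r p : ℝ} (hr : 0 ≤ r) (hp : 1 ≤ p) :
    (r * p + 1) ^ (1 / p) ≤ r + 1 := by
  have hp0 : 0 < p := lt_of_lt_of_le one_pos hp
  have h1 : r * p + 1 ≤ (1 + r) ^ p := by
    have := one_add_mul_self_le_rpow_one_add (by linarith : (-1:ℝ) ≤ r) hp
    linarith
  calc (r * p + 1) ^ (1 / p) ≤ ((1 + r) ^ p) ^ (1 / p) :=
        Real.rpow_le_rpow (by positivity) h1 (by positivity)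
    _ = (1 + r) ^ (p * (1 / p)) := by rw [← Real.rpow_mul (by linarith)]
    _ = r + 1 := by rw [mul_one_div_cancel hp0.ne', Real.rpow_one]; ring

set_option maxHeartbeats 1000000 in
theorem two_point_trapezoid_Lp_lipschitz
    (a b H L r p x I : ℝ) (f u : ℝ → ℝ)
    (hp : 1 < p) (hr : 0 < r) (hr1 : r ≤ 1) (hH : 0 ≤ H) (hL : 0 ≤ L)
    (hf : ∀ s ∈ Set.Icc a b, ∀ t ∈ Set.Icc a b, |f s - f t| ≤ H * |s - t| ^ r)
    (hu : ∀ s ∈ Set.Icc a b, ∀ t ∈ Set.Icc a b, |u s - u t| ≤ L * |s - t|)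
    (hx : x ∈ Set.Icc a b)
    (hI : IsRSIntegral f u a b I) :
    |I - (u x - u a) * f a - (u b - u x) * f b| ≤
      H * L * ((x - a) ^ (r + 1) + (b - x) ^ (r + 1)) / (r * p + 1) ^ (1 / p) := by
  obtain ⟨hax, hxb⟩ := hx
  have hab : a ≤ b := hax.trans hxb
  have hS : 0 ≤ (x - a) ^ (r + 1) + (b - x) ^ (r + 1) := by
    have := Real.rpow_nonneg (by linarith : (0:ℝ) ≤ x - a) (r+1)
    have := Real.rpow_nonneg (by linarith : (0:ℝ) ≤ b - x) (r+1)
    linarith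
  rw [sub_sub]
  have step1 : |I - ((u x - u a) * f a + (u b - u x) * f b)| ≤
      H * L * ((x - a) ^ (r + 1) + (b - x) ^ (r + 1)) / (r + 1) := by
    apply le_of_forall_pos_le_add
    intro ε hε
    obtain ⟨δ, hδ, hδP⟩ := hI ε hε
    obtain ⟨m, hm⟩ := exists_nat_gt ((b - a) / δ)
    obtain ⟨n, hn0, hmn⟩ : ∃ n : ℕ, 0 < n ∧ (b - a) / δ < n :=
      ⟨m + 1, Nat.succ_pos m, hm.trans_le (by exact_mod_cast Nat.le_succ m)⟩
    have hnR : (0:ℝ) < n := by exact_mod_cast hn0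
    have hbd : (b - a) / (n:ℝ) < δ := by
      rw [div_lt_iff₀ hnR]
      have h := (div_lt_iff₀ hδ).mp hmn
      nlinarith
    set d1 := (x - a) / (n:ℝ) with hd1_def
    set d2 := (b - x) / (n:ℝ) with hd2_def
    have hd1 : 0 ≤ d1 := div_nonneg (by linarith) hnR.le
    have hd2 : 0 ≤ d2 := div_nonneg (by linarith) hnR.le
    have hnd1 : (n:ℝ) * d1 = x - a := by rw [hd1_def]; field_simp
    have hnd2 : (n:ℝ) * d2 = b - x := by rw [hd2_def]; field_simp
    have hd1δ : d1 < δ := by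
      have h : d1 ≤ (b - a) / (n:ℝ) := by rw [hd1_def]; gcongr
      linarith
    have hd2δ : d2 < δ := by
      have h : d2 ≤ (b - a) / (n:ℝ) := by rw [hd2_def]; gcongr
      linarith
    set pts : ℕ → ℝ := fun i => if i ≤ n then a + i * d1 else min b (x + ((i:ℝ) - n) * d2)
      with hpts_def
    have hpts_le : ∀ i, i ≤ n → pts i = a + i * d1 := by
      intro i hi; simp [hpts_def, hi]
    have hptsx : pts n = x := by rw [hpts_le n le_rfl, hnd1]; ring
    have hpts_ge : ∀ i, n ≤ i → i ≤ 2 * n → pts i = x + ((i:ℝ) - n) * d2 := by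
      intro i h1 h2
      rcases eq_or_lt_of_le h1 with h | h
      · rw [← h, hptsx]; simp
      · have hni : ¬ (i ≤ n) := by omega
        have hcast : ((i:ℝ) - n) ≤ n := by
          have : (i:ℝ) ≤ 2 * n := by exact_mod_cast h2
          linarith
        have hle : x + ((i:ℝ) - n) * d2 ≤ b := by
          have h3 : ((i:ℝ) - n) * d2 ≤ (n:ℝ) * d2 := by
            apply mul_le_mul_of_nonneg_right hcast hd2
          linarith [hnd2]
        simp [hpts_def, hni, min_eq_right hle]
    have hmono : ∀ i, pts i ≤ pts (i + 1) := by
      intro i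
      by_cases h1 : i + 1 ≤ n
      · rw [hpts_le i (by omega), hpts_le (i+1) h1]
        push_cast
        nlinarith
      · by_cases h2 : i ≤ n
        · have hin : i = n := by omega
          have hii : i ≤ n := by omega
          rw [hpts_le i hii]
          simp only [hpts_def, h1, if_false]
          rw [hin]
          have e : a + (n:ℝ) * d1 = x := by linarith [hnd1]
          rw [e]
          refine le_min hxb ?_
          have h0 : (0:ℝ) ≤ ((n:ℝ) + 1 - (n:ℝ)) * d2 := by nlinarith
          push_cast
          linarith
        · have hni : ¬ (i ≤ n) := h2
          have hni1 : ¬ (i + 1 ≤ n) := by omega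
          simp only [hpts_def, hni, hni1, if_false]
          apply min_le_min le_rfl
          push_cast
          nlinarith
    set tag : ℕ → ℝ := fun i => if i < n then pts i else pts (i + 1) with htag_def
    have htag_lt : ∀ i, i < n → tag i = pts i := by intro i hi; simp [htag_def, hi]
    have htag_ge : ∀ i, n ≤ i → tag i = pts (i + 1) := by
      intro i hi; simp [htag_def, Nat.not_lt.mpr hi]
    set P : TaggedPartition a b :=
      { n := 2 * n, pts := pts, tag := tag, mono := hmono
        first := by rw [hpts_le 0 (by omega)]; simp
        last := by
          rw [hpts_ge (2*n) (by omega) le_rfl]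
          have hc : ((2*n : ℕ):ℝ) - (n:ℝ) = (n:ℝ) := by push_cast; ring
          rw [hc, hnd2]; ring
        tag_mem := by
          intro i
          by_cases hi : i < n
          · rw [htag_lt i hi]; exact ⟨le_rfl, hmono i⟩
          · rw [htag_ge i (Nat.not_lt.mp hi)]; exact ⟨hmono i, le_rfl⟩ } with hP_def
    have hstep : ∀ i, i < n → pts (i+1) - pts i = d1 := by
      intro i hi
      rw [hpts_le i (by omega), hpts_le (i+1) (by omega)]
      push_cast; ring
    have hstep2 : ∀ i, n ≤ i → i < 2*n → pts (i+1) - pts i = d2 := by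
      intro i h1 h2
      rw [hpts_ge i h1 (by omega), hpts_ge (i+1) (by omega) (by omega)]
      push_cast; ring
    have hmesh : ∀ i, i < P.n → P.pts (i + 1) - P.pts i < δ := by
      intro i hi
      show pts (i+1) - pts i < δ
      by_cases h : i < n
      · rw [hstep i h]; exact hd1δ
      · rw [hstep2 i (Nat.not_lt.mp h) hi]; exact hd2δ
    have hclose := hδP P hmesh
    have hptsb : pts (2*n) = b := P.last
    have hRS : RSsum f u P
        = ∑ i ∈ Finset.range (2*n), f (tag i) * (u (pts (i+1)) - u (pts i)) := rfl
    clear_value P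
    clear hP_def hmesh
    clear_value tag
    clear htag_def
    clear_value pts
    clear hpts_def
    clear_value d2 d1
    clear hd1_def hd2_def
    have hptsmem : ∀ i, i ≤ 2*n → pts i ∈ Set.Icc a b := by
      intro i hi
      rw [Set.mem_Icc]
      by_cases h : i ≤ n
      · rw [hpts_le i h]
        have hic : (i:ℝ) ≤ n := by exact_mod_cast h
        have h1 : (0:ℝ) ≤ (i:ℝ) * d1 := mul_nonneg (Nat.cast_nonneg i) hd1
        have h2 : (i:ℝ) * d1 ≤ (n:ℝ) * d1 := mul_le_mul_of_nonneg_right hic hd1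
        exact ⟨by linarith, by linarith [hnd1]⟩
      · have h1 : n ≤ i := by omega
        rw [hpts_ge i h1 hi]
        have hic : (n:ℝ) ≤ (i:ℝ) := by exact_mod_cast h1
        have hic2 : (i:ℝ) ≤ 2*n := by exact_mod_cast hi
        have h2 : (0:ℝ) ≤ ((i:ℝ) - n) * d2 := mul_nonneg (by linarith) hd2
        have h3 : ((i:ℝ) - n) * d2 ≤ (n:ℝ) * d2 :=
          mul_le_mul_of_nonneg_right (by linarith) hd2
        exact ⟨by linarith, by linarith [hnd2]⟩
    have hsum : RSsum f u P = (∑ i ∈ Finset.range n, f (pts i) * (u (pts (i+1)) - u (pts i)))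
        + ∑ i ∈ Finset.range n, f (pts (n + i + 1)) * (u (pts (n + i + 1)) - u (pts (n + i))) := by
      rw [hRS, two_mul, Finset.sum_range_add]
      congr 1
      · exact Finset.sum_congr rfl fun i hi => by
          rw [htag_lt i (Finset.mem_range.mp hi)]
      · exact Finset.sum_congr rfl fun i hi => by
          rw [htag_ge (n + i) (Nat.le_add_right n i)]
    have t1 : ∑ i ∈ Finset.range n, (u (pts (i+1)) - u (pts i)) = u x - u a := by
      rw [Finset.sum_range_sub (fun i => u (pts i)) n, hptsx, hpts_le 0 (by omega)]
      norm_num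
    have t2 : ∑ i ∈ Finset.range n, (u (pts (n + i + 1)) - u (pts (n + i))) = u b - u x := by
      have h := Finset.sum_range_sub (fun i => u (pts (n + i))) n
      calc ∑ i ∈ Finset.range n, (u (pts (n + i + 1)) - u (pts (n + i)))
          = u (pts (n + n)) - u (pts (n + 0)) := h
        _ = u b - u x := by rw [show n + n = 2*n by ring, hptsb, Nat.add_zero, hptsx]
    have e1 : ∑ i ∈ Finset.range n, (f (pts i) - f a) * (u (pts (i+1)) - u (pts i))
        = (∑ i ∈ Finset.range n, f (pts i) * (u (pts (i+1)) - u (pts i))) - (u x - u a) * f a := by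
      rw [← t1, Finset.sum_mul, ← Finset.sum_sub_distrib]
      exact Finset.sum_congr rfl fun i _ => by ring
    have e2 : ∑ i ∈ Finset.range n, (f (pts (n+i+1)) - f b) * (u (pts (n+i+1)) - u (pts (n+i)))
        = (∑ i ∈ Finset.range n, f (pts (n+i+1)) * (u (pts (n+i+1)) - u (pts (n+i))))
          - (u b - u x) * f b := by
      rw [← t2, Finset.sum_mul, ← Finset.sum_sub_distrib]
      exact Finset.sum_congr rfl fun i _ => by ring
    have key : RSsum f u P - ((u x - u a) * f a + (u b - u x) * f b)
        = (∑ i ∈ Finset.range n, (f (pts i) - f a) * (u (pts (i+1)) - u (pts i)))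
          + ∑ i ∈ Finset.range n, (f (pts (n+i+1)) - f b) * (u (pts (n+i+1)) - u (pts (n+i))) := by
      rw [hsum, e1, e2]; ring
    have hb1 : |∑ i ∈ Finset.range n, (f (pts i) - f a) * (u (pts (i+1)) - u (pts i))|
        ≤ H * L * ((x-a)^(r+1)/(r+1)) := by
      calc |∑ i ∈ Finset.range n, (f (pts i) - f a) * (u (pts (i+1)) - u (pts i))|
          ≤ ∑ i ∈ Finset.range n, |(f (pts i) - f a) * (u (pts (i+1)) - u (pts i))| :=
            Finset.abs_sum_le_sum_abs _ _
        _ ≤ ∑ i ∈ Finset.range n, (H * ((i:ℝ)*d1)^r) * (L * d1) := by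
            apply Finset.sum_le_sum
            intro i hi
            have hi' := Finset.mem_range.mp hi
            have hmem1 : pts i ∈ Set.Icc a b := hptsmem i (by omega)
            have hmem2 : pts (i+1) ∈ Set.Icc a b := hptsmem (i+1) (by omega)
            have hfa : |f (pts i) - f a| ≤ H * ((i:ℝ)*d1)^r := by
              have hh := hf (pts i) hmem1 a (Set.left_mem_Icc.mpr hab)
              have habs : |pts i - a| = (i:ℝ)*d1 := by
                rw [hpts_le i (by omega),
                  show a + (i:ℝ)*d1 - a = (i:ℝ)*d1 by ring,
                  abs_of_nonneg (mul_nonneg (Nat.cast_nonneg i) hd1)]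
              rw [habs] at hh; exact hh
            have hua : |u (pts (i+1)) - u (pts i)| ≤ L * d1 := by
              have hh := hu (pts (i+1)) hmem2 (pts i) hmem1
              have habs : |pts (i+1) - pts i| = d1 := by
                rw [hstep i hi', abs_of_nonneg hd1]
              rw [habs] at hh; exact hh
            rw [abs_mul]
            exact mul_le_mul hfa hua (abs_nonneg _) (by positivity)
        _ = H * L * ∑ i ∈ Finset.range n, ((i:ℝ)*d1)^r * d1 := by
            rw [Finset.mul_sum]; exact Finset.sum_congr rfl fun i _ => by ring
        _ ≤ H * L * (((n:ℝ)*d1)^(r+1)/(r+1)) :=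
            mul_le_mul_of_nonneg_left (riemann_sum_rpow_le hr n hd1) (by positivity)
        _ = H * L * ((x-a)^(r+1)/(r+1)) := by rw [hnd1]
    have hb2 : |∑ i ∈ Finset.range n, (f (pts (n+i+1)) - f b) * (u (pts (n+i+1)) - u (pts (n+i)))|
        ≤ H * L * ((b-x)^(r+1)/(r+1)) := by
      calc |∑ i ∈ Finset.range n, (f (pts (n+i+1)) - f b) * (u (pts (n+i+1)) - u (pts (n+i)))|
          ≤ ∑ i ∈ Finset.range n, |(f (pts (n+i+1)) - f b) * (u (pts (n+i+1)) - u (pts (n+i)))| :=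
            Finset.abs_sum_le_sum_abs _ _
        _ ≤ ∑ i ∈ Finset.range n, (H * (((n:ℝ)-1-i)*d2)^r) * (L * d2) := by
            apply Finset.sum_le_sum
            intro i hi
            have hi' := Finset.mem_range.mp hi
            have hic : (i:ℝ) < n := by exact_mod_cast hi'
            have hic1 : (i:ℝ) + 1 ≤ n := by
              have : (i:ℝ) + 1 ≤ n := by exact_mod_cast hi'
              exact this
            have hmem1 : pts (n+i) ∈ Set.Icc a b := hptsmem (n+i) (by omega)
            have hmem2 : pts (n+i+1) ∈ Set.Icc a b := hptsmem (n+i+1) (by omega)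
            have hfb : |f (pts (n+i+1)) - f b| ≤ H * (((n:ℝ)-1-i)*d2)^r := by
              have hh := hf (pts (n+i+1)) hmem2 b (Set.right_mem_Icc.mpr hab)
              have habs : |pts (n+i+1) - b| = ((n:ℝ)-1-i)*d2 := by
                rw [hpts_ge (n+i+1) (by omega) (by omega)]
                have hcast : ((n+i+1 : ℕ):ℝ) = (n:ℝ)+i+1 := by push_cast; ring
                rw [hcast]
                have heq : x + ((n:ℝ)+i+1-n)*d2 - b = -(((n:ℝ)-1-i)*d2) := by
                  linear_combination hnd2
                rw [heq, abs_neg, abs_of_nonneg]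
                exact mul_nonneg (by linarith) hd2
              rw [habs] at hh; exact hh
            have hub : |u (pts (n+i+1)) - u (pts (n+i))| ≤ L * d2 := by
              have hh := hu (pts (n+i+1)) hmem2 (pts (n+i)) hmem1
              have habs : |pts (n+i+1) - pts (n+i)| = d2 := by
                rw [hstep2 (n+i) (by omega) (by omega), abs_of_nonneg hd2]
              rw [habs] at hh; exact hh
            rw [abs_mul]
            exact mul_le_mul hfb hub (abs_nonneg _)
              (mul_nonneg hH (Real.rpow_nonneg (mul_nonneg (by linarith) hd2) r))
        _ = H * L * ∑ i ∈ Finset.range n, (((n:ℝ)-1-i)*d2)^r * d2 := by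
            rw [Finset.mul_sum]; exact Finset.sum_congr rfl fun i _ => by ring
        _ = H * L * ∑ i ∈ Finset.range n, ((i:ℝ)*d2)^r * d2 := by
            congr 1
            rw [← Finset.sum_range_reflect (fun j => ((j:ℝ)*d2)^r * d2) n]
            refine Finset.sum_congr rfl fun i hi => ?_
            have hi' := Finset.mem_range.mp hi
            have hc : ((n - 1 - i : ℕ):ℝ) = (n:ℝ)-1-i := by
              rw [Nat.sub_sub, Nat.cast_sub (by omega : 1 + i ≤ n)]
              push_cast; ring
            rw [hc]
        _ ≤ H * L * (((n:ℝ)*d2)^(r+1)/(r+1)) :=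
            mul_le_mul_of_nonneg_left (riemann_sum_rpow_le hr n hd2) (by positivity)
        _ = H * L * ((b-x)^(r+1)/(r+1)) := by rw [hnd2]
    have habs2 : |RSsum f u P - ((u x - u a) * f a + (u b - u x) * f b)|
        ≤ H * L * ((x - a) ^ (r + 1) + (b - x) ^ (r + 1)) / (r + 1) := by
      rw [key]
      refine (abs_add_le _ _).trans ?_
      have heq : H * L * ((x - a) ^ (r + 1) + (b - x) ^ (r + 1)) / (r + 1)
          = H * L * ((x-a)^(r+1)/(r+1)) + H * L * ((b-x)^(r+1)/(r+1)) := by ring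
      rw [heq]
      exact add_le_add hb1 hb2
    calc |I - ((u x - u a) * f a + (u b - u x) * f b)|
        ≤ |I - RSsum f u P| + |RSsum f u P - ((u x - u a) * f a + (u b - u x) * f b)| :=
          abs_sub_le _ _ _
      _ ≤ ε + H * L * ((x - a) ^ (r + 1) + (b - x) ^ (r + 1)) / (r + 1) :=
          add_le_add (by rw [abs_sub_comm]; exact hclose.le) habs2
      _ = H * L * ((x - a) ^ (r + 1) + (b - x) ^ (r + 1)) / (r + 1) + ε := by ring
  have hpow_pos : (0:ℝ) < (r*p+1)^(1/p) := Real.rpow_pos_of_pos (by positivity) _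
  have hble : (r * p + 1) ^ (1 / p) ≤ r + 1 := bern_div hr.le hp.le
  refine step1.trans ?_
  exact div_le_div_of_nonneg_left (mul_nonneg (mul_nonneg hH hL) hS) hpow_pos hble
end

section
/- Let 1 < p < ∞ and let f : [a,b] → ℝ be Lipschitz with constant L. Then for all a ≤ t₀ ≤ x ≤ t₁ ≤ b, |(x−a)·f(t₀) + (b−x)·f(t₁) − ∫ₐᵇ f(s) ds| ≤ L·[ (t₀−a)²/(p+1)^{1/p} + (t₁−t₀)^{1−1/p}·( ((x−t₀)^{p+1} + (t₁−x)^{p+1}) / (p+1) )^{1/p} + (b−t₁)²/(p+1)^{1/p} ]. -/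
open Set intervalIntegral

theorem integral_abs_sub_of_mem_Icc {a b t : ℝ} (hat : a ≤ t) (htb : t ≤ b) :
    ∫ s in a..b, |t - s| = ((t - a) ^ 2 + (b - t) ^ 2) / 2 := by
  have hcont : Continuous fun s : ℝ => |t - s| := by fun_prop
  have hleft : ∫ s in a..t, |t - s| = ∫ s in a..t, (t - s) :=
    integral_congr fun s hs => abs_of_nonneg <| by rw [uIcc_of_le hat] at hs; linarith [hs.2]
  have hright : ∫ s in t..b, |t - s| = ∫ s in t..b, (s - t) :=
    integral_congr fun s hs => by
      rw [uIcc_of_le htb] at hs; exact abs_of_nonpos (by linarith [hs.1]) |>.trans (neg_sub t s)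
  rw [← integral_add_adjacent_intervals (hcont.intervalIntegrable a t)
      (hcont.intervalIntegrable t b), hleft, hright,
    integral_sub intervalIntegrable_const intervalIntegrable_id,
    integral_sub intervalIntegrable_id intervalIntegrable_const]
  simp only [integral_const, integral_id, smul_eq_mul]
  ring

theorem abs_mul_sub_integral_le {f : ℝ → ℝ} {a b t L : ℝ} (hat : a ≤ t) (htb : t ≤ b)
    (hf : ∀ s ∈ Icc a b, |f t - f s| ≤ L * |t - s|)
    (hfi : IntervalIntegrable f MeasureTheory.volume a b) :
    |(b - a) * f t - ∫ s in a..b, f s| ≤ L * ((t - a) ^ 2 + (b - t) ^ 2) / 2 := by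
  have hab : a ≤ b := hat.trans htb
  have hrect : (b - a) * f t - ∫ s in a..b, f s = ∫ s in a..b, (f t - f s) := by
    rw [integral_sub intervalIntegrable_const hfi, integral_const, smul_eq_mul]
  have hbound : ∀ᵐ s ∂MeasureTheory.volume, s ∈ Ioc a b → ‖f t - f s‖ ≤ L * |t - s| :=
    Filter.Eventually.of_forall fun s hs => hf s (Ioc_subset_Icc_self hs)
  rw [hrect, ← Real.norm_eq_abs, mul_div_assoc, ← integral_abs_sub_of_mem_Icc hat htb,
    ← integral_const_mul]
  exact norm_integral_le_of_norm_le hab hbound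
    ((by fun_prop : Continuous fun s => L * |t - s|).intervalIntegrable a b)

theorem sq_add_sq_le_rpow_mul_rpow {α β p : ℝ} (hα : 0 ≤ α) (hβ : 0 ≤ β) (hp : 1 ≤ p) :
    α ^ 2 + β ^ 2 ≤ (α + β) ^ (1 - 1 / p) * (α ^ (p + 1) + β ^ (p + 1)) ^ (1 / p) := by
  have h := Real.inner_le_weight_mul_Lp_of_nonneg Finset.univ hp ![α, β] ![α, β]
    (by simp [Fin.forall_fin_two, hα, hβ]) (by simp [Fin.forall_fin_two, hα, hβ])
  simp only [Fin.sum_univ_two, Matrix.cons_val_zero, Matrix.cons_val_one] at h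
  rw [Real.rpow_add_one' hα (by positivity), Real.rpow_add_one' hβ (by positivity)]
  simpa [sq, one_div, mul_comm] using h

theorem add_one_rpow_one_div_le_two {p : ℝ} (hp : 1 ≤ p) : (p + 1) ^ (1 / p) ≤ 2 := by
  have hp0 : 0 < p := by linarith
  have hbernoulli : p + 1 ≤ 2 ^ p := by
    have := one_add_mul_self_le_rpow_one_add (by norm_num : (-1 : ℝ) ≤ 1) hp
    norm_num at this
    linarith
  calc (p + 1) ^ (1 / p) ≤ ((2 : ℝ) ^ p) ^ (1 / p) := by gcongr
    _ = 2 := by rw [← Real.rpow_mul zero_le_two, mul_one_div_cancel hp0.ne', Real.rpow_one]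

theorem sq_add_sq_div_two_le {α β p : ℝ} (hα : 0 ≤ α) (hβ : 0 ≤ β) (hp : 1 ≤ p) :
    (α ^ 2 + β ^ 2) / 2 ≤
      (α + β) ^ (1 - 1 / p) * ((α ^ (p + 1) + β ^ (p + 1)) / (p + 1)) ^ (1 / p) := by
  have hc : 0 < (p + 1) ^ (1 / p) := by positivity
  rw [Real.div_rpow (by positivity) (by linarith), mul_div_assoc', le_div_iff₀ hc]
  calc (α ^ 2 + β ^ 2) / 2 * (p + 1) ^ (1 / p) ≤ α ^ 2 + β ^ 2 := by
        have := add_one_rpow_one_div_le_two hp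
        nlinarith [sq_nonneg α, sq_nonneg β]
    _ ≤ _ := sq_add_sq_le_rpow_mul_rpow hα hβ hp

theorem two_point_riemann_lipschitz
    (a b L p t0 x t1 : ℝ) (f : ℝ → ℝ)
    (hp : 1 < p) (hL : 0 ≤ L)
    (hf : ∀ s ∈ Set.Icc a b, ∀ t ∈ Set.Icc a b, |f s - f t| ≤ L * |s - t|)
    (ht0 : a ≤ t0) (ht0x : t0 ≤ x) (hxt1 : x ≤ t1) (ht1 : t1 ≤ b) :
    |(x - a) * f t0 + (b - x) * f t1 - ∫ s in a..b, f s| ≤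
      L * ((t0 - a) ^ 2 / (p + 1) ^ (1 / p) +
        (t1 - t0) ^ (1 - 1 / p) *
          (((x - t0) ^ (p + 1) + (t1 - x) ^ (p + 1)) / (p + 1)) ^ (1 / p) +
        (b - t1) ^ 2 / (p + 1) ^ (1 / p)) := by
  have hax : a ≤ x := ht0.trans ht0x
  have hxb : x ≤ b := hxt1.trans ht1
  have hcont : ContinuousOn f (Icc a b) := (LipschitzOnWith.of_dist_le' hf).continuousOn
  have hint_left : IntervalIntegrable f MeasureTheory.volume a x :=
    (hcont.mono (Icc_subset_Icc_right hxb)).intervalIntegrable_of_Icc hax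
  have hint_right : IntervalIntegrable f MeasureTheory.volume x b :=
    (hcont.mono (Icc_subset_Icc_left hax)).intervalIntegrable_of_Icc hxb
  have hleft := abs_mul_sub_integral_le ht0 ht0x
    (fun s hs => hf t0 ⟨ht0, ht0x.trans hxb⟩ s ⟨hs.1, hs.2.trans hxb⟩) hint_left
  have hright := abs_mul_sub_integral_le hxt1 ht1
    (fun s hs => hf t1 ⟨hax.trans hxt1, ht1⟩ s ⟨hax.trans hs.1, hs.2⟩) hint_right
  have hsplit : (x - a) * f t0 + (b - x) * f t1 - ∫ s in a..b, f s =
      ((x - a) * f t0 - ∫ s in a..x, f s) + ((b - x) * f t1 - ∫ s in x..b, f s) := by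
    rw [← integral_add_adjacent_intervals hint_left hint_right]
    ring
  have hroot_le_two := add_one_rpow_one_div_le_two hp.le
  calc _ ≤ L * ((t0 - a) ^ 2 + (x - t0) ^ 2) / 2 + L * ((t1 - x) ^ 2 + (b - t1) ^ 2) / 2 :=
        hsplit ▸ (abs_add_le _ _).trans (add_le_add hleft hright)
    _ = L * ((t0 - a) ^ 2 / 2 + ((x - t0) ^ 2 + (t1 - x) ^ 2) / 2 + (b - t1) ^ 2 / 2) := by ring
    _ ≤ _ := by
      gcongr
      rw [show t1 - t0 = (x - t0) + (t1 - x) by ring]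
      exact sq_add_sq_div_two_le (sub_nonneg.2 ht0x) (sub_nonneg.2 hxt1) hp.le
end
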